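/- Let M be a compact smooth manifold and E a smooth complex vector bundle of finite rank over M. Then there exist finitely many smooth global sections s₁, …, sₙ of E such that for every point x ∈ M the vectors s₁(x), …, sₙ(x) span the fiber E_x over ℂ. -/

import Mathlib

/-! Cover `M` by finitely many trivializing base sets `U_j` and take a smooth partition of unity
`ρ_j` subordinate to this cover. For a basis `b` of the model fiber, the sections `ρ_j • e_j⁻¹ b_k`
extend by zero to smooth global sections. At any point some `ρ_j(x)` is nonzero, and there these
sections are a nonzero multiple of a basis of `E_x`. This gives a real spanning family, and a real
span is contained in the complex span. -/

open Bundle Manifold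
open scoped TensorProduct

local notation "∞" => (⊤ : ℕ∞)

noncomputable section

/-- Complex multiplication and addition are smooth over `ℝ`, so that the complex-valued smooth
functions on a real manifold form a (comm)ring. -/
instance : ContMDiffRing 𝓘(ℝ, ℂ) (⊤ : ℕ∞) ℂ where
  contMDiff_add := by
    rw [contMDiff_iff]
    refine ⟨continuous_add, fun x y => ?_⟩
    simp only [mfld_simps, chartAt_self_eq]
    rw [contDiffOn_univ]
    exact contDiff_add
  contMDiff_mul := by
    rw [contMDiff_iff]
    refine ⟨continuous_mul, fun x y => ?_⟩
    simp only [mfld_simps, chartAt_self_eq]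
    rw [contDiffOn_univ]
    exact contDiff_mul

section RealBundle

variable {EM : Type*} [NormedAddCommGroup EM] [NormedSpace ℝ EM]
  {HM : Type*} [TopologicalSpace HM] {IM : ModelWithCorners ℝ EM HM}
  {M : Type*} [TopologicalSpace M] [ChartedSpace HM M]
  {F : Type*} [NormedAddCommGroup F] [NormedSpace ℝ F]
  {V : M → Type*} [TopologicalSpace (TotalSpace F V)]
  [∀ x, AddCommGroup (V x)] [∀ x, Module ℝ (V x)] [∀ x, TopologicalSpace (V x)]
  [FiberBundle F V] [VectorBundle ℝ F V] {n : ℕ∞} [ContMDiffVectorBundle n F V IM]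

def Bundle.Trivialization.cutoffLocalFrame {ι : Type*}
    (e : Trivialization F (π F V)) [MemTrivializationAtlas e] (b : Module.Basis ι ℝ F)
    {ρ : M → ℝ} (hρ : ContMDiff IM 𝓘(ℝ) n ρ) (hρe : tsupport ρ ⊆ e.baseSet) (i : ι) :
    Cₛ^n⟮IM; F, V⟯ :=
  ⟨fun x ↦ ρ x • e.localFrame b i x, ContMDiffOn.smul_section_of_tsupport hρ.contMDiffOn
    e.open_baseSet hρe (e.contMDiffOn_localFrame_baseSet n b i)⟩

theorem Bundle.Trivialization.span_cutoffLocalFrame {ι : Type*}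
    (e : Trivialization F (π F V)) [MemTrivializationAtlas e] (b : Module.Basis ι ℝ F)
    {ρ : M → ℝ} (hρ : ContMDiff IM 𝓘(ℝ) n ρ) (hρe : tsupport ρ ⊆ e.baseSet) {x : M}
    (hx : ρ x ≠ 0) :
    Submodule.span ℝ (Set.range fun i ↦ e.cutoffLocalFrame b hρ hρe i x) = ⊤ := by
  have hxe : x ∈ e.baseSet := hρe (subset_tsupport ρ hx)
  have hframe : (fun i ↦ e.cutoffLocalFrame b hρ hρe i x) = fun i ↦ ρ x • e.basisAt b hxe i := by
    ext i
    simp [cutoffLocalFrame, hxe]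
  rw [hframe, Set.range_smul, Submodule.span_smul_eq_of_isUnit _ _ hx.isUnit,
    (e.basisAt b hxe).span_eq]

theorem exists_fin_contMDiffSections_span_eq_top [FiniteDimensional ℝ EM] [IsManifold IM ∞ M]
    [T2Space M] [CompactSpace M] [FiniteDimensional ℝ F] :
    ∃ (N : ℕ) (s : Fin N → Cₛ^n⟮IM; F, V⟯),
      ∀ x : M, Submodule.span ℝ (Set.range fun i ↦ s i x) = ⊤ := by
  obtain ⟨t, ht⟩ := isCompact_univ.elim_finite_subcover
    (fun y : M ↦ (trivializationAt F V y).baseSet) (fun y ↦ (trivializationAt F V y).open_baseSet)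
    fun y _ ↦ Set.mem_iUnion.2 ⟨y, FiberBundle.mem_baseSet_trivializationAt' y⟩
  obtain ⟨ρ, hρ⟩ := SmoothPartitionOfUnity.exists_isSubordinate IM isClosed_univ
    (fun y : t ↦ (trivializationAt F V y).baseSet) (fun y ↦ (trivializationAt F V y).open_baseSet)
    (by simpa [Set.iUnion_subtype] using ht)
  have hρn (y : t) : ContMDiff IM 𝓘(ℝ) n (ρ y) :=
    (ρ y).contMDiff.of_le (WithTop.coe_le_coe.2 le_top)
  let b := Module.finBasis ℝ F
  let s : t × Fin (Module.finrank ℝ F) → Cₛ^n⟮IM; F, V⟯ := fun p ↦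
    (trivializationAt F V p.1).cutoffLocalFrame b (hρn p.1) (hρ p.1) p.2
  refine ⟨_, s ∘ (Fintype.equivFin _).symm, fun x ↦ ?_⟩
  obtain ⟨y, hy⟩ := ρ.exists_pos_of_mem (Set.mem_univ x)
  refine eq_top_mono (Submodule.span_mono ?_)
    ((trivializationAt F V y).span_cutoffLocalFrame b (hρn y) (hρ y) hy.ne')
  rintro _ ⟨i, rfl⟩
  exact ⟨Fintype.equivFin _ (y, i), by simp [s]⟩

end RealBundle

variable {EM : Type*} [NormedAddCommGroup EM] [NormedSpace ℝ EM] [FiniteDimensional ℝ EM]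
  {HM : Type*} [TopologicalSpace HM] {IM : ModelWithCorners ℝ EM HM}
  {M : Type*} [TopologicalSpace M] [ChartedSpace HM M] [IsManifold IM (⊤ : ℕ∞) M]
  [T2Space M] [SecondCountableTopology M] [CompactSpace M]

variable {F : Type*} [NormedAddCommGroup F] [NormedSpace ℂ F] [FiniteDimensional ℂ F]
  {V : M → Type*} [TopologicalSpace (TotalSpace F V)]
  [∀ x, AddCommGroup (V x)] [∀ x, Module ℂ (V x)] [∀ x, TopologicalSpace (V x)]
  [FiberBundle F V] [VectorBundle ℂ F V] [VectorBundle ℝ F V] [ContMDiffVectorBundle (⊤ : ℕ∞) F V IM]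

theorem exists_finite_spanning_sections :
    ∃ (n : ℕ) (s : Fin n → Cₛ^∞⟮IM; F, V⟯),
      ∀ x : M, Submodule.span ℂ (Set.range fun i => s i x) = (⊤ : Submodule ℂ (V x)) := by
  obtain ⟨N, s, hs⟩ :=
    exists_fin_contMDiffSections_span_eq_top (IM := IM) (F := F) (V := V) (n := ∞)
  refine ⟨N, s, fun x ↦ eq_top_iff.2 fun v _ ↦ ?_⟩
  exact Submodule.span_le_restrictScalars ℝ ℂ _ (hs x ▸ Submodule.mem_top)

end
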